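/- Let p be a prime and X_1, X_2 disjoint subsets of 𝔽_p with min{|X_1|, |X_2|} ≥ 3 and |X_1| + |X_2| ≤ p − 4. Suppose there are x_1, y_1, r ∈ 𝔽_p with X_1 = r[x_1, y_1], and |(X_1 − X_2) ∪ (X_2 − X_1)| ≤ |X_1| + |X_2| + 1. Then one of the following holds: (i) there are c, z, z' ∈ 𝔽_p such that X_2 = r([y_1+c, x_1−c] \ {z, z'}); (ii) there are x_2, y_2 ∈ 𝔽_p such that X_2 = r([x_2, y_2] ∪ [x_1+y_1−y_2, x_1+y_1−x_2]) and |X_1| = 3. -/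

import Mathlib

/-!
Dilating by `r⁻¹` reduces to `r = 1`; write `A = [x, y]`, `k = |A|`, `m = |B|`. Since `A` and `B`
are disjoint, `0 ∉ A - B`, so the representatives `S ⊆ [1, q - k]` of `x - B` in `ℕ` turn
`A - B` into the sumset `S + [0, k)` of natural numbers, with no wrap-around. In `ℕ`,
`|S + [0, k)| ≥ |S| + k - 1` with equality only for intervals, so the hypothesis
`|A - B| ≤ k + m + 1` leaves two possibilities.

Either `S + [0, k)` is an interval, and then so is `A - B`. Comparing it with its negative `B - A`
shows that the sum of its endpoints lies within `f = k + m + 1 - |A - B|` of `0`, and widening the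
hull of `B` (of size `|A - B| - k + 1`) by this amount makes it symmetric about the centre of `A`
while leaving at most two of its points outside `B`. Or `k = 3` and `S` consists of two blocks
separated by at least three points; then `|A - B| = k + m + 1` forces `B - A = A - B`, negation
must send the two left ends of the blocks of `A - B` to right ends, and of the two possible
matchings one is impossible by size while the other makes the two blocks of `B` mirror images
about the centre of `A`.
-/

open scoped Pointwise

/-- The interval `[x,y]` in `ZMod p`: `{x, x+1, …, x+i}` where `i ∈ {0,…,p-1}`
reduces to `y - x` mod `p`. -/
def itv {p : ℕ} (x y : ZMod p) : Finset (ZMod p) :=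
  (Finset.range ((y - x).val + 1)).image (fun i : ℕ => x + (i : ZMod p))

open Finset

lemma Finset.exists_eq_sdiff_pair {α : Type*} [DecidableEq α] {B J : Finset α} {w : α}
    (hBJ : B ⊆ J) (hw : w ∉ J) (h : (J \ B).card ≤ 2) : ∃ z z', B = J \ {z, z'} := by
  have hB : B = J \ (J \ B) := (sdiff_sdiff_eq_self hBJ).symm
  interval_cases hc : (J \ B).card
  · rw [card_eq_zero.1 hc, sdiff_empty] at hB
    refine ⟨w, w, ?_⟩
    rwa [insert_eq_of_mem (mem_singleton_self w), ← erase_eq, erase_eq_of_notMem hw]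
  · obtain ⟨z, hz⟩ := card_eq_one.1 hc
    exact ⟨z, z, by simpa [hz] using hB⟩
  · obtain ⟨z, z', -, hz⟩ := card_eq_two.1 hc
    exact ⟨z, z', hz ▸ hB⟩

section Interval

lemma mem_itv_iff_exists {q : ℕ} {x y t : ZMod q} :
    t ∈ itv x y ↔ ∃ i ≤ (y - x).val, x + i = t := by
  simp [itv]

lemma image_natCast_Icc {q : ℕ} {a b : ℕ} (hab : a ≤ b) (hb : b < q) :
    (Icc a b).image (Nat.cast : ℕ → ZMod q) = itv (a : ZMod q) b := by
  have hlen : ((b : ZMod q) - a).val = b - a := by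
    rw [← Nat.cast_sub hab, ZMod.val_cast_of_lt (by omega)]
  ext t
  simp only [mem_image, mem_Icc, mem_itv_iff_exists, hlen]
  constructor
  · rintro ⟨n, ⟨han, hnb⟩, rfl⟩
    exact ⟨n - a, by omega, by push_cast [Nat.cast_sub han]; ring⟩
  · rintro ⟨i, hi, rfl⟩
    exact ⟨a + i, by omega, by push_cast; ring⟩

lemma val_add_sub_sub_of_lt {q : ℕ} {a b : ZMod q} {i j : ℕ} (h : (b - a).val + i + j < q) :
    (b + j - (a - i)).val = (b - a).val + i + j := by
  rw [show b + j - (a - i) = (b - a) + ((i + j : ℕ) : ZMod q) by push_cast; ring,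
    ZMod.val_add_of_lt (by rw [ZMod.val_cast_of_lt (by omega)]; omega),
    ZMod.val_cast_of_lt (by omega), add_assoc]

lemma itv_subset_itv_sub_add {q : ℕ} {a b : ZMod q} {i j : ℕ} (h : (b - a).val + i + j < q) :
    itv a b ⊆ itv (a - i) (b + j) := by
  intro t ht
  obtain ⟨l, hl, rfl⟩ := mem_itv_iff_exists.1 ht
  exact mem_itv_iff_exists.2 ⟨i + l, by rw [val_add_sub_sub_of_lt h]; omega, by push_cast; ring⟩

variable {q : ℕ} [NeZero q]

lemma mem_itv {x y t : ZMod q} : t ∈ itv x y ↔ (t - x).val ≤ (y - x).val := by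
  rw [mem_itv_iff_exists]
  constructor
  · rintro ⟨i, hi, rfl⟩
    rwa [add_sub_cancel_left, ZMod.val_cast_of_lt (hi.trans_lt (ZMod.val_lt _))]
  · exact fun h => ⟨_, h, by rw [ZMod.natCast_zmod_val, add_sub_cancel]⟩

lemma card_itv (x y : ZMod q) : (itv x y).card = (y - x).val + 1 := by
  rw [itv, card_image_of_injOn, card_range]
  intro i hi j hj hij
  simp only [coe_range, Set.mem_Iio] at hi hj
  have hq : (y - x).val + 1 ≤ q := (ZMod.val_lt _)
  exact CharP.natCast_injOn_Iio (ZMod q) q (by simp; omega) (by simp; omega) (add_left_cancel hij)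

lemma image_sub_itv (z x y : ZMod q) : (itv x y).image (z - ·) = itv (z - y) (z - x) := by
  have hlen : (z - x - (z - y)).val = (y - x).val := by rw [sub_sub_sub_cancel_left]
  have hy : (((y - x).val : ℕ) : ZMod q) = y - x := ZMod.natCast_zmod_val _
  ext t
  simp only [mem_image, mem_itv_iff_exists, hlen]
  constructor
  · rintro ⟨_, ⟨i, hi, rfl⟩, rfl⟩
    refine ⟨(y - x).val - i, Nat.sub_le _ _, ?_⟩
    rw [Nat.cast_sub hi, hy]; ring
  · rintro ⟨i, hi, rfl⟩
    refine ⟨x + ((y - x).val - i : ℕ), ⟨_, Nat.sub_le _ _, rfl⟩, ?_⟩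
    rw [Nat.cast_sub hi, hy]; ring

lemma neg_itv (x y : ZMod q) : -itv x y = itv (-y) (-x) := by
  simpa [image_neg_eq_neg] using image_sub_itv 0 x y

lemma card_itv_sub_add {a b : ZMod q} {i j : ℕ} (h : (b - a).val + i + j < q) :
    (itv (a - (i : ZMod q)) (b + (j : ZMod q))).card = (b - a).val + i + j + 1 := by
  rw [card_itv, val_add_sub_sub_of_lt h]

lemma image_sub_natCast_Icc (x : ZMod q) {a b : ℕ} (hab : a ≤ b) (hb : b < q) :
    (Icc a b).image (fun n : ℕ => x - n) = itv (x - (b : ZMod q)) (x - (a : ZMod q)) := by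
  rw [← image_sub_itv, ← image_natCast_Icc hab hb, image_image]
  rfl

lemma eq_add_card_itv_sub_one (x y : ZMod q) :
    y = x + (((itv x y).card - 1 : ℕ) : ZMod q) := by
  rw [card_itv, Nat.add_sub_cancel, ZMod.natCast_zmod_val, add_sub_cancel]

lemma exists_sub_eq_of_card_itv_union_le {a b g d : ZMod q} {f : ℕ}
    (hlen : (d - g).val = (b - a).val) (hf : f ≤ (b - a).val) (hq : (b - a).val + 1 + f < q)
    (hcard : (itv a b ∪ itv g d).card ≤ (b - a).val + 1 + f) :
    ∃ i j : ℕ, i + j ≤ f ∧ g - a = i - j := by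
  set n := (b - a).val
  set s := (g - a).val with hs_def
  have hsq : s < q := ZMod.val_lt _
  by_contra! hne
  have hs : f < s := by
    by_contra! h
    exact hne s 0 (by omega) (by simp [s])
  have hs' : f < q - s := by
    by_contra! h
    refine hne 0 (q - s) (by omega) ?_
    rw [Nat.cast_sub hsq.le, ZMod.natCast_self, hs_def, ZMod.natCast_zmod_val]; ring
  -- the points `g + l` with `s + l ∈ (n, q)` lie in `itv g d` but not in `itv a b`
  set T := (Icc (max s (n + 1) - s) (min (s + n) (q - 1) - s)).image fun l : ℕ => g + l
  have hval : ∀ l ≤ min (s + n) (q - 1) - s, (g + l - a).val = s + l := fun l hl => by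
    rw [show g + l - a = (g - a) + (l : ZMod q) by ring,
      ZMod.val_add_of_lt (by rw [ZMod.val_cast_of_lt (by omega)]; omega),
      ZMod.val_cast_of_lt (by omega)]
  have hTd : T ⊆ itv g d := by
    simp only [T, image_subset_iff, mem_Icc]
    exact fun l hl => mem_itv_iff_exists.2 ⟨l, by omega, rfl⟩
  have hTab : Disjoint (itv a b) T := by
    simp only [T, disjoint_right, mem_image, mem_Icc, mem_itv]
    rintro _ ⟨l, hl, rfl⟩
    rw [hval l hl.2]
    omega
  have hTcard : f + 1 ≤ T.card := by
    rw [card_image_of_injOn, Nat.card_Icc]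
    · omega
    · intro l hl l' hl' h
      simp only [coe_Icc, Set.mem_Icc] at hl hl'
      exact CharP.natCast_injOn_Iio (ZMod q) q (by simp; omega) (by simp; omega)
        (add_left_cancel h)
  have := card_le_card (union_subset_union_right (s := itv a b) hTd)
  rw [card_union_of_disjoint hTab, card_itv] at this
  omega

lemma exists_add_eq_of_card_itv_union_neg_le {a b : ZMod q} {f : ℕ} (hf : f ≤ (b - a).val)
    (hq : (b - a).val + 1 + f < q) (hcard : (itv a b ∪ -itv a b).card ≤ (b - a).val + 1 + f) :
    ∃ i j : ℕ, i + j ≤ f ∧ a + b = j - i := by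
  rw [neg_itv] at hcard
  obtain ⟨i, j, hij, h⟩ := exists_sub_eq_of_card_itv_union_le (by rw [neg_sub_neg]) hf hq hcard
  exact ⟨i, j, hij, by linear_combination -h⟩

lemma exists_eq_itv_sdiff_pair_of_subset {x y L R : ZMod q} {B : Finset (ZMod q)}
    (hBJ : B ⊆ itv L R) (hLR : L + R = x + y) (hcard : (itv L R).card ≤ B.card + 2)
    (hq : B.card + 2 < q) : ∃ c z z', B = itv (y + c) (x - c) \ {z, z'} := by
  obtain ⟨w, -, hw⟩ := exists_mem_notMem_of_card_lt_card (s := itv L R) (t := univ)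
    (by rw [card_univ, ZMod.card]; omega)
  obtain ⟨z, z', hzz⟩ := exists_eq_sdiff_pair hBJ hw (by rw [card_sdiff_of_subset hBJ]; omega)
  refine ⟨L - y, z, z', ?_⟩
  rwa [add_sub_cancel, show x - (L - y) = R by linear_combination -hLR]

end Interval

section NatAddRange

lemma Icc_add_range {a b k : ℕ} (hab : a ≤ b) (hk : 1 ≤ k) :
    Icc a b + range k = Icc a (b + k - 1) := by
  ext n
  simp only [mem_add, mem_Icc, mem_range]
  constructor
  · rintro ⟨x, hx, i, hi, rfl⟩
    omega
  · exact fun hn => ⟨min n b, by omega, n - min n b, by omega, by omega⟩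

lemma card_add_range_ge {S : Finset ℕ} (hS : S.Nonempty) {k : ℕ} (hk : 1 ≤ k) :
    S.card + k - 1 ≤ (S + range k).card := by
  simpa using cauchy_davenport_add_of_linearOrder_isCancelAdd hS (nonempty_range_iff.2 (by omega))

lemma eq_Icc_of_card_add_range_lt {S : Finset ℕ} (hS : S.Nonempty) {k : ℕ} (hk : 2 ≤ k)
    (h : (S + range k).card < S.card + k) : S = Icc (S.min' hS) (S.max' hS) := by
  set M := S.max' hS
  have hsucc : ∀ s ∈ S, s < M → s + 1 ∈ S := by
    intro s hs hsM
    by_contra hs1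
    have hsub : insert (s + 1) (S ∪ Ioc M (M + k - 1)) ⊆ S + range k := by
      intro n hn
      simp only [mem_insert, mem_union, mem_Ioc] at hn
      rcases hn with rfl | hn | hn
      · exact add_mem_add hs (mem_range.2 (by omega))
      · simpa using add_mem_add hn (mem_range.2 (by omega : 0 < k))
      · have := add_mem_add (max'_mem S hS) (mem_range.2 (by omega : n - M < k))
        rwa [show M + (n - M) = n by omega] at this
    have hdisj : Disjoint S (Ioc M (M + k - 1)) :=
      disjoint_left.2 fun n hn hn' => by have := le_max' S n hn; simp at hn'; omega
    have hnew : s + 1 ∉ S ∪ Ioc M (M + k - 1) := by simp [hs1]; omega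
    have := card_le_card hsub
    rw [card_insert_of_notMem hnew, card_union_of_disjoint hdisj, Nat.card_Ioc] at this
    omega
  ext n
  refine ⟨fun hn => mem_Icc.2 ⟨min'_le _ _ hn, le_max' _ _ hn⟩, fun hn => ?_⟩
  obtain ⟨hmn, hnM⟩ := mem_Icc.1 hn
  induction n, hmn using Nat.le_induction with
  | base => exact min'_mem _ _
  | succ n hmn ih => exact hsucc n (ih (mem_Icc.2 ⟨hmn, by omega⟩) (by omega)) (by omega)

lemma two_blocks_of_notMem_add_range {S : Finset ℕ} {k x : ℕ} (hk : 3 ≤ k)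
    (hlo : ∃ s ∈ S, s < x) (hhi : ∃ s ∈ S, x < s) (hx : x ∉ S + range k)
    (h : (S + range k).card ≤ S.card + k + 1) :
    k = 3 ∧ ∃ a w w' b, a ≤ w ∧ w + 4 ≤ w' ∧ w' ≤ b ∧ S = Icc a w ∪ Icc w' b := by
  have hgap : ∀ s ∈ S, s + k ≤ x ∨ x < s := fun s hs => by
    by_contra! hsx
    exact hx (mem_add.2 ⟨s, hs, x - s, mem_range.2 (by omega), by omega⟩)
  set L := S.filter (· < x)
  set H := S.filter (x < ·)
  have hLne : L.Nonempty := let ⟨s, hs, hsx⟩ := hlo; ⟨s, mem_filter.2 ⟨hs, hsx⟩⟩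
  have hHne : H.Nonempty := let ⟨s, hs, hsx⟩ := hhi; ⟨s, mem_filter.2 ⟨hs, hsx⟩⟩
  have hLx : ∀ s ∈ L, s + k ≤ x := fun s hs => by
    obtain ⟨hs, hsx⟩ := mem_filter.1 hs
    have := hgap s hs
    omega
  have hSLH : S = L ∪ H := by
    ext s
    simp only [L, H, mem_union, mem_filter]
    constructor
    · intro hs
      rcases hgap s hs with h | h
      exacts [.inl ⟨hs, by omega⟩, .inr ⟨hs, h⟩]
    · rintro (⟨hs, -⟩ | ⟨hs, -⟩) <;> exact hs
  have hLH : Disjoint L H := disjoint_filter.2 fun _ _ h => by omega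
  have hLHk : Disjoint (L + range k) (H + range k) := by
    simp only [disjoint_left, mem_add, mem_range, not_exists, not_and]
    rintro _ ⟨s, hs, i, hi, rfl⟩ t ht j hj
    have := hLx s hs
    have := (mem_filter.1 ht).2
    omega
  rw [hSLH, union_add, card_union_of_disjoint hLHk, card_union_of_disjoint hLH] at h
  have hL := card_add_range_ge hLne (k := k) (by omega)
  have hH := card_add_range_ge hHne (k := k) (by omega)
  have hk3 : k = 3 := by omega
  refine ⟨hk3, _, _, _, _, min'_le_max' _ hLne, ?_, min'_le_max' _ hHne, ?_⟩
  · have := hLx _ (max'_mem L hLne)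
    have := (mem_filter.1 (min'_mem H hHne)).2
    omega
  · rw [hSLH, ← eq_Icc_of_card_add_range_lt hLne (k := k) (by omega) (by omega),
      ← eq_Icc_of_card_add_range_lt hHne (k := k) (by omega) (by omega)]

lemma add_range_eq_Icc_or_two_blocks {S : Finset ℕ} (hS : S.Nonempty) {k : ℕ} (hk : 3 ≤ k)
    (h : (S + range k).card ≤ S.card + k + 1) :
    (∃ u v, S ⊆ Icc u v ∧ S + range k = Icc u (v + k - 1)) ∨
      k = 3 ∧ ∃ a w w' b, a ≤ w ∧ w + 4 ≤ w' ∧ w' ≤ b ∧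
        S = Icc a w ∪ Icc w' b := by
  set u := S.min' hS
  set v := S.max' hS
  have hSuv : S ⊆ Icc u v := fun s hs => mem_Icc.2 ⟨min'_le _ _ hs, le_max' _ _ hs⟩
  have hsub : S + range k ⊆ Icc u (v + k - 1) := by
    intro n hn
    obtain ⟨s, hs, i, hi, rfl⟩ := mem_add.1 hn
    have := mem_Icc.1 (hSuv hs)
    rw [mem_range] at hi
    exact mem_Icc.2 (by omega)
  by_cases hfull : Icc u (v + k - 1) ⊆ S + range k
  · exact .inl ⟨u, v, hSuv, subset_antisymm hsub hfull⟩
  obtain ⟨x, hxI, hx⟩ := not_subset.1 hfull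
  rw [mem_Icc] at hxI
  have hmem : ∀ s ∈ S, s ≤ x → x < s + k → False := fun s hs h1 h2 =>
    hx (mem_add.2 ⟨s, hs, x - s, mem_range.2 (by omega), by omega⟩)
  refine .inr (two_blocks_of_notMem_add_range hk ⟨u, min'_mem S hS, ?_⟩
    ⟨v, max'_mem S hS, ?_⟩ hx h)
  · by_contra
    exact hmem u (min'_mem S hS) (by omega) (by omega)
  · by_contra
    exact hmem v (max'_mem S hS) (by omega) (by omega)

end NatAddRange

section Lift

lemma natCast_mem_image_natCast_iff {q : ℕ} {T : Finset ℕ} (hT : ∀ n ∈ T, n < q) {n : ℕ}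
    (hn : n < q) :
    (n : ZMod q) ∈ T.image Nat.cast ↔ n ∈ T := by
  refine ⟨fun h => ?_, mem_image_of_mem _⟩
  obtain ⟨m, hm, hmn⟩ := mem_image.1 h
  rwa [← CharP.natCast_injOn_Iio (ZMod q) q (hT m hm) hn hmn]

lemma card_image_natCast {q : ℕ} {T : Finset ℕ} (hT : ∀ n ∈ T, n < q) :
    (T.image (Nat.cast : ℕ → ZMod q)).card = T.card :=
  card_image_of_injOn fun _ hm _ hn h => CharP.natCast_injOn_Iio (ZMod q) q (hT _ hm) (hT _ hn) h

-- `e` is a left end of a block of `T`, and `n ≡ -e` is a right end of one.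
lemma exists_add_eq_of_neg_subset {q : ℕ} {T : Finset ℕ} (hT : ∀ n ∈ T, 1 ≤ n ∧ n < q)
    (hneg : -(T.image (Nat.cast : ℕ → ZMod q)) ⊆ T.image Nat.cast) {e : ℕ} (he : e ∈ T)
    (he' : e - 1 ∉ T) : ∃ n ∈ T, n + 1 ∉ T ∧ e + n = q := by
  obtain ⟨n, hn, hne⟩ := mem_image.1 (hneg (neg_mem_neg (mem_image_of_mem _ he)))
  have hen : e + n = q := by
    have h0 : ((e + n : ℕ) : ZMod q) = 0 := by push_cast; linear_combination hne
    have := hT e he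
    have := hT n hn
    exact Nat.eq_of_dvd_of_lt_two_mul (by omega) ((ZMod.natCast_eq_zero_iff _ _).1 h0) (by omega)
  refine ⟨n, hn, fun hn1 => he' ?_, hen⟩
  have hmem := hneg (neg_mem_neg (mem_image_of_mem Nat.cast hn1))
  rw [show -((n + 1 : ℕ) : ZMod q) = ((e - 1 : ℕ) : ZMod q) by
    push_cast [Nat.cast_sub (hT e he).1]; linear_combination -hne] at hmem
  exact (natCast_mem_image_natCast_iff (fun m hm => (hT m hm).2) (by have := hT e he; omega)).1 hmem

lemma add_ends_eq_of_neg_subset {q a w w' b : ℕ} (ha : 1 ≤ a) (haw : a ≤ w)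
    (hww' : w + 4 ≤ w') (hw'b : w' ≤ b) (hb : b + 3 ≤ q)
    (hneg : -((Icc a (w + 2) ∪ Icc w' (b + 2)).image (Nat.cast : ℕ → ZMod q)) ⊆
      (Icc a (w + 2) ∪ Icc w' (b + 2)).image Nat.cast) :
    a + b + 2 = q ∧ w + w' + 2 = q := by
  have hT : ∀ n ∈ Icc a (w + 2) ∪ Icc w' (b + 2), 1 ≤ n ∧ n < q := fun n hn => by
    simp only [mem_union, mem_Icc] at hn
    omega
  obtain ⟨n₁, hn₁, hn₁', ha₁⟩ := exists_add_eq_of_neg_subset hT hneg (e := a)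
    (by simp; omega) (by simp; omega)
  obtain ⟨n₂, hn₂, hn₂', hw₂⟩ := exists_add_eq_of_neg_subset hT hneg (e := w')
    (by simp; omega) (by simp; omega)
  simp only [mem_union, mem_Icc] at hn₁ hn₁' hn₂ hn₂'
  omega

def subVals {q : ℕ} (x : ZMod q) (B : Finset (ZMod q)) : Finset ℕ :=
  B.image fun b => (x - b).val

variable {q : ℕ} [NeZero q]

lemma image_subVals (x : ZMod q) (B : Finset (ZMod q)) :
    (subVals x B).image (fun n : ℕ => x - n) = B := by
  simp [subVals, image_image, Function.comp_def]

lemma card_subVals (x : ZMod q) (B : Finset (ZMod q)) : (subVals x B).card = B.card :=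
  card_image_of_injective _ fun b b' h => by
    simpa using congrArg (Nat.cast : ℕ → ZMod q) h

lemma itv_sub_eq_image (x y : ZMod q) (B : Finset (ZMod q)) :
    itv x y - B = (subVals x B + range (itv x y).card).image Nat.cast := by
  ext t
  rw [card_itv]
  simp only [mem_sub, mem_image, mem_add, mem_range, subVals, mem_itv_iff_exists, Nat.lt_succ_iff]
  constructor
  · rintro ⟨_, ⟨i, hi, rfl⟩, b, hb, rfl⟩
    exact ⟨_, ⟨_, ⟨b, hb, rfl⟩, i, hi, rfl⟩, by push_cast [ZMod.natCast_zmod_val]; ring⟩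
  · rintro ⟨_, ⟨_, ⟨b, hb, rfl⟩, i, hi, rfl⟩, rfl⟩
    exact ⟨_, ⟨i, hi, rfl⟩, b, hb, by push_cast [ZMod.natCast_zmod_val]; ring⟩

lemma subVals_bounds {x y : ZMod q} {B : Finset (ZMod q)} (hdisj : Disjoint (itv x y) B) :
    ∀ n ∈ subVals x B, 1 ≤ n ∧ n + (itv x y).card ≤ q := by
  simp only [subVals, mem_image, card_itv]
  rintro _ ⟨b, hb, rfl⟩
  have hbA : (y - x).val < (b - x).val := by
    by_contra! h
    exact disjoint_left.1 hdisj (mem_itv.2 h) hb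
  have hbx : b - x ≠ 0 := fun h0 => by simp [h0] at hbA
  rw [← neg_sub, ZMod.neg_val, if_neg hbx]
  have := ZMod.val_lt (b - x)
  omega

lemma subVals_add_range_lt {x y : ZMod q} {B : Finset (ZMod q)} (hdisj : Disjoint (itv x y) B) :
    ∀ n ∈ subVals x B + range (itv x y).card, n < q := by
  intro n hn
  obtain ⟨s, hs, i, hi, rfl⟩ := mem_add.1 hn
  have := subVals_bounds hdisj s hs
  rw [mem_range] at hi
  omega

lemma exists_eq_itv_sdiff_pair {x y : ZMod q} {B : Finset (ZMod q)} {u v : ℕ}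
    (hdisj : Disjoint (itv x y) B) (hk3 : 3 ≤ (itv x y).card) (hB : B.Nonempty)
    (hq : (itv x y).card + B.card + 2 ≤ q)
    (h : ((itv x y - B) ∪ (B - itv x y)).card ≤ (itv x y).card + B.card + 1)
    (hSuv : subVals x B ⊆ Icc u v)
    (hSD : subVals x B + range (itv x y).card = Icc u (v + (itv x y).card - 1)) :
    ∃ c z z', B = itv (y + c) (x - c) \ {z, z'} := by
  have hk : (itv x y).card = (y - x).val + 1 := card_itv x y
  have huv : u ≤ v := by
    obtain ⟨s, hs⟩ := hB.image fun b => (x - b).val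
    have := mem_Icc.1 (hSuv hs)
    omega
  obtain ⟨e, he⟩ : ∃ e, e = v + (itv x y).card - 1 := ⟨_, rfl⟩
  rw [← he] at hSD
  have heq : e < q := subVals_add_range_lt hdisj _ (hSD ▸ mem_Icc.2 ⟨by omega, le_rfl⟩)
  have hD : itv x y - B = itv (u : ZMod q) (e : ZMod q) := by
    rw [itv_sub_eq_image, hSD, image_natCast_Icc (by omega) heq]
  have hBuv : B ⊆ itv (x - v) (x - u) := by
    rw [← image_subVals x B, ← image_sub_natCast_Icc x huv (by omega)]
    exact image_subset_image hSuv
  have hCD : B.card + (itv x y).card - 1 ≤ e + 1 - u := by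
    have := card_add_range_ge (hB.image fun b => (x - b).val) (k := (itv x y).card) (by omega)
    rwa [← subVals, hSD, Nat.card_Icc, card_subVals] at this
  have hlen : ((e : ZMod q) - u).val = e - u := by
    rw [← Nat.cast_sub (by omega), ZMod.val_cast_of_lt (by omega)]
  have hDcard : e + 1 - u ≤ (itv x y).card + B.card + 1 := by
    have := (card_le_card subset_union_left).trans h
    rw [hD, card_itv, hlen] at this
    omega
  obtain ⟨i, j, hij, hσ⟩ := exists_add_eq_of_card_itv_union_neg_le
    (f := (itv x y).card + B.card + 1 - (e + 1 - u)) (by rw [hlen]; omega) (by rw [hlen]; omega)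
    (by rw [← hD, neg_sub, hlen]; omega)
  have hvu : (x - u - (x - v) : ZMod q).val = v - u := by
    rw [show (x - u - (x - v) : ZMod q) = ((v - u : ℕ) : ZMod q) by
      push_cast [Nat.cast_sub huv]; ring, ZMod.val_cast_of_lt (by omega)]
  have hJ : (x - u - (x - v) : ZMod q).val + i + j < q := by rw [hvu]; omega
  have hy := eq_add_card_itv_sub_one x y
  rw [show (itv x y).card - 1 = e - v by omega, Nat.cast_sub (by omega)] at hy
  -- enlarging the hull of `B` by `i` and `j` makes it symmetric about the centre of `itv x y`
  refine exists_eq_itv_sdiff_pair_of_subset (hBuv.trans (itv_subset_itv_sub_add hJ)) ?_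
    (by rw [card_itv_sub_add hJ, hvu]; omega) (by omega)
  rw [hy]
  linear_combination -hσ

lemma exists_eq_itv_union_symm {x y : ZMod q} {B : Finset (ZMod q)} {a w w' b : ℕ}
    (hdisj : Disjoint (itv x y) B) (hk : (itv x y).card = 3)
    (h : ((itv x y - B) ∪ (B - itv x y)).card ≤ (itv x y).card + B.card + 1)
    (haw : a ≤ w) (hww' : w + 4 ≤ w') (hw'b : w' ≤ b)
    (hS : subVals x B = Icc a w ∪ Icc w' b) :
    ∃ x₂ y₂, B = itv x₂ y₂ ∪ itv (x + y - y₂) (x + y - x₂) := by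
  have ha := subVals_bounds hdisj a (by rw [hS]; simp [haw])
  have hb := subVals_bounds hdisj b (by rw [hS]; simp [hw'b])
  rw [hk] at ha hb
  have hSD : subVals x B + range (itv x y).card = Icc a (w + 2) ∪ Icc w' (b + 2) := by
    rw [hk, hS, union_add, Icc_add_range haw (by norm_num), Icc_add_range hw'b (by norm_num)]
    rfl
  have hDcard : (itv x y - B).card = (itv x y).card + B.card + 1 := by
    have hdisj₁ : Disjoint (Icc a w) (Icc w' b) :=
      disjoint_left.2 fun n hn hn' => by simp only [mem_Icc] at hn hn'; omega
    have hdisj₂ : Disjoint (Icc a (w + 2)) (Icc w' (b + 2)) :=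
      disjoint_left.2 fun n hn hn' => by simp only [mem_Icc] at hn hn'; omega
    rw [itv_sub_eq_image, card_image_natCast (subVals_add_range_lt hdisj), hSD,
      ← card_subVals x B, hS, hk, card_union_of_disjoint hdisj₁,
      card_union_of_disjoint hdisj₂]
    simp only [Nat.card_Icc]
    omega
  have hneg : -(itv x y - B) ⊆ itv x y - B := by
    rw [neg_sub, eq_of_subset_of_card_le subset_union_left (h.trans hDcard.ge)]
    exact subset_union_right
  rw [itv_sub_eq_image, hSD] at hneg
  obtain ⟨hab, hww⟩ := add_ends_eq_of_neg_subset ha.1 haw hww' hw'b hb.2 hneg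
  replace hab : ((a + b + 2 : ℕ) : ZMod q) = 0 := by rw [hab, ZMod.natCast_self]
  replace hww : ((w + w' + 2 : ℕ) : ZMod q) = 0 := by rw [hww, ZMod.natCast_self]
  push_cast at hab hww
  have hy := eq_add_card_itv_sub_one x y
  rw [hk] at hy
  norm_num at hy
  refine ⟨x - b, x - w', ?_⟩
  rw [← image_subVals x B, hS, image_union, image_sub_natCast_Icc x haw (by omega),
    image_sub_natCast_Icc x hw'b (by omega), union_comm,
    show x + y - (x - w') = x - w by rw [hy]; linear_combination hww,
    show x + y - (x - b) = x - a by rw [hy]; linear_combination hab]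

end Lift

theorem itv_sub_structure {q : ℕ} [NeZero q] {x y : ZMod q} {B : Finset (ZMod q)}
    (hdisj : Disjoint (itv x y) B) (hk : 3 ≤ (itv x y).card) (hB : B.Nonempty)
    (hq : (itv x y).card + B.card + 2 ≤ q)
    (h : ((itv x y - B) ∪ (B - itv x y)).card ≤ (itv x y).card + B.card + 1) :
    (∃ c z z', B = itv (y + c) (x - c) \ {z, z'}) ∨
      ∃ x₂ y₂, B = itv x₂ y₂ ∪ itv (x + y - y₂) (x + y - x₂) ∧
        (itv x y).card = 3 := by
  have hS : (subVals x B + range (itv x y).card).card ≤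
      (subVals x B).card + (itv x y).card + 1 := by
    rw [← card_image_natCast (subVals_add_range_lt hdisj), ← itv_sub_eq_image, card_subVals]
    have := (card_le_card (subset_union_left (s₂ := B - itv x y))).trans h
    omega
  rcases add_range_eq_Icc_or_two_blocks (hB.image _) hk hS with
    ⟨u, v, hSuv, hSD⟩ | ⟨hk3, a, w, w', b, haw, hww', hw'b, hSab⟩
  · exact .inl (exists_eq_itv_sdiff_pair hdisj hk hB hq h hSuv hSD)
  · obtain ⟨x₂, y₂, hB₂⟩ := exists_eq_itv_union_symm hdisj hk3 h haw hww' hw'b hSab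
    exact .inr ⟨x₂, y₂, hB₂, hk3⟩

lemma smul_finset_sub {α β : Type*} [Monoid α] [AddGroup β] [DistribMulAction α β]
    [DecidableEq β] (r : α) (s t : Finset β) : r • (s - t) = r • s - r • t := by
  simp only [smul_finset_def, sub_def]
  exact image_image₂_distrib fun a b => smul_sub r a b

theorem stmt_12 (p : ℕ) (hp : p.Prime) (X₁ X₂ : Finset (ZMod p))
    (hdisj : Disjoint X₁ X₂) (h₁ : 3 ≤ X₁.card) (h₂ : 3 ≤ X₂.card)
    (hsum : X₁.card + X₂.card ≤ p - 4)
    (x₁ y₁ r : ZMod p) (hX₁ : X₁ = r • itv x₁ y₁)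
    (h : ((X₁ - X₂) ∪ (X₂ - X₁)).card ≤ X₁.card + X₂.card + 1) :
    (∃ c z z' : ZMod p, X₂ = r • (itv (y₁ + c) (x₁ - c) \ {z, z'})) ∨
    (∃ x₂ y₂ : ZMod p,
      X₂ = r • (itv x₂ y₂ ∪ itv (x₁ + y₁ - y₂) (x₁ + y₁ - x₂)) ∧ X₁.card = 3) := by
  have : Fact p.Prime := ⟨hp⟩
  have : NeZero p := ⟨hp.ne_zero⟩
  have hr : r ≠ 0 := by
    rintro rfl
    have := card_le_card (hX₁ ▸ zero_smul_finset_subset (itv x₁ y₁))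
    simp at this
    omega
  obtain ⟨B, rfl⟩ : ∃ B : Finset (ZMod p), X₂ = r • B :=
    ⟨r⁻¹ • X₂, (smul_inv_smul₀ hr X₂).symm⟩
  subst hX₁
  rw [smul_finset_def, smul_finset_def,
    disjoint_image (f := fun t : ZMod p => r • t) (mul_right_injective₀ hr)] at hdisj
  rw [← smul_finset_sub, ← smul_finset_sub, ← smul_finset_union] at h
  simp only [card_smul_finset₀ hr] at h₁ h₂ hsum h
  rcases itv_sub_structure hdisj h₁ (card_pos.1 (by omega)) (by omega) h with
    ⟨c, z, z', hB⟩ | ⟨x₂, y₂, hB, hk⟩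
  · exact .inl ⟨c, z, z', by rw [hB]⟩
  · exact .inr ⟨x₂, y₂, by rw [hB], by rw [card_smul_finset₀ hr, hk]⟩
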